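/- arXiv:1710.09462 — 6 statements merged into one kernel-verified Lean document; each statement's English description precedes it below -/
import Mathlib

section
/- For every integer N ≥ 2, the function f_*(x) = N^{-2/(N-1)} · (1-x)^{-(3-b)} · (N-x)^{-b}, with b = (N-2)/(N-1), is a probability density on [0, N/(N+1)]: it satisfies ∫_0^{N/(N+1)} f_*(x) dx = 1. -/
open Real MeasureTheory

/-!
Write `p = 1/(N-1)`, so that `b = 1 - p`, `3 - b = p + 2` and `C_N = N^(-2p)`. The function
`F(x) = x (N-x)^p / (1-x)^(p+1)` has derivative `N (1-x)^(-(p+2)) (N-x)^(p-1)` as soon as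
`p (N-1) = 1`, so `f_* = N^(-(2p+1)) F'`. At `a = N/(N+1)` we have `N - a = N²/(N+1)` and
`1 - a = 1/(N+1)`, whence `F(a) = N^(2p+1)` and the integral is `N^(-(2p+1)) (F(a) - F(0)) = 1`.
-/

noncomputable def fstarPrimitive (n p y : ℝ) : ℝ := y * (n - y) ^ p / (1 - y) ^ (p + 1)

theorem hasDerivAt_fstarPrimitive {n p x : ℝ} (hp : p * (n - 1) = 1) (hx1 : x < 1)
    (hxn : x < n) :
    HasDerivAt (fstarPrimitive n p) (n / ((1 - x) ^ (p + 2) * (n - x) ^ (1 - p))) x := by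
  have h1 : 0 < 1 - x := by linarith
  have hn : 0 < n - x := by linarith
  have hnum : HasDerivAt (fun y => y * (n - y) ^ p)
      ((n - x) ^ p - x * (p * (n - x) ^ (p - 1))) x := by
    refine ((hasDerivAt_id' x).mul (((hasDerivAt_id' x).const_sub n).rpow_const
      (Or.inl hn.ne'))).congr_deriv ?_
    ring
  have hden : HasDerivAt (fun y => (1 - y) ^ (p + 1)) (-((p + 1) * (1 - x) ^ p)) x := by
    refine (((hasDerivAt_id' x).const_sub 1).rpow_const (Or.inl h1.ne')).congr_deriv ?_
    rw [add_sub_cancel_right]; ring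
  refine (hnum.div hden (rpow_pos_of_pos h1 _).ne').congr_deriv ?_
  rw [rpow_sub hn, rpow_one, rpow_add h1, rpow_add h1, rpow_one, rpow_sub hn, rpow_one,
    show (2:ℝ) = 1 + 1 by norm_num, rpow_add h1, rpow_one]
  have := rpow_pos_of_pos hn p
  have := rpow_pos_of_pos h1 p
  field_simp
  linear_combination x * hp

theorem integral_eq_fstarPrimitive {n p a : ℝ} (hp : p * (n - 1) = 1) (ha0 : 0 ≤ a)
    (ha1 : a < 1) (han : a < n) :
    ∫ x in (0:ℝ)..a, n / ((1 - x) ^ (p + 2) * (n - x) ^ (1 - p)) = fstarPrimitive n p a := by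
  have hbounds : ∀ x ∈ Set.uIcc 0 a, 0 < 1 - x ∧ 0 < n - x := fun x hx => by
    rw [Set.uIcc_of_le ha0] at hx
    constructor <;> linarith [hx.2]
  have hcont : ContinuousOn (fun x => n / ((1 - x) ^ (p + 2) * (n - x) ^ (1 - p)))
      (Set.uIcc 0 a) := fun x hx => by
    obtain ⟨h1, hn⟩ := hbounds x hx
    apply ContinuousAt.continuousWithinAt
    fun_prop (disch := first | positivity | exact Or.inl (by positivity))
  rw [intervalIntegral.integral_eq_sub_of_hasDerivAt (fun x hx => hasDerivAt_fstarPrimitive hp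
    (by linarith [(hbounds x hx).1]) (by linarith [(hbounds x hx).2])) hcont.intervalIntegrable]
  simp [fstarPrimitive]

theorem fstarPrimitive_div_add_one {n : ℝ} (hn : 0 < n) (p : ℝ) :
    fstarPrimitive n p (n / (n + 1)) = n ^ (2 * p + 1) := by
  have hn1 : 0 < n + 1 := by linarith
  have hgap : n - n / (n + 1) = n ^ (2:ℝ) / (n + 1) := by
    rw [rpow_two]; field_simp; ring
  have hgap1 : 1 - n / (n + 1) = (n + 1)⁻¹ := by field_simp; ring
  rw [fstarPrimitive, hgap, hgap1, div_rpow (by positivity) hn1.le, ← rpow_mul hn.le,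
    inv_rpow hn1.le, rpow_add hn, rpow_add hn1, rpow_one, rpow_one]
  have := rpow_pos_of_pos hn1 p
  field_simp

/-- For every integer `N ≥ 2`, the Nash-equilibrium density
`f_*(x) = N^{-2/(N-1)} (1-x)^{-(3-b)} (N-x)^{-b}` with `b = (N-2)/(N-1)`
integrates to `1` over its support `[0, N/(N+1)]`. -/
theorem fstar_integral_eq_one (N : ℕ) (hN : 2 ≤ N) :
    ∫ x in (0:ℝ)..((N:ℝ)/((N:ℝ)+1)),
      (N:ℝ) ^ (-(2:ℝ)/((N:ℝ)-1)) /
        ((1-x) ^ ((3:ℝ) - ((N:ℝ)-2)/((N:ℝ)-1)) * ((N:ℝ)-x) ^ (((N:ℝ)-2)/((N:ℝ)-1))) = 1 := by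
  have hN' : (2:ℝ) ≤ N := by exact_mod_cast hN
  set n : ℝ := (N : ℝ)
  set p : ℝ := 1 / (n - 1)
  have hn : 0 < n := by linarith
  have hn1 : n - 1 ≠ 0 := by linarith
  have hp : p * (n - 1) = 1 := one_div_mul_cancel hn1
  have hb : (n - 2) / (n - 1) = 1 - p := by
    rw [div_eq_iff hn1]; linear_combination hp
  have hc : -2 / (n - 1) = -(2 * p + 1) + 1 := by ring
  have hintegrand : ∀ x : ℝ, n ^ (-2 / (n - 1)) / ((1 - x) ^ (3 - (n - 2) / (n - 1)) *
      (n - x) ^ ((n - 2) / (n - 1))) =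
      n ^ (-(2 * p + 1)) * (n / ((1 - x) ^ (p + 2) * (n - x) ^ (1 - p))) := fun x => by
    rw [hb, hc, rpow_add hn, rpow_one, show (3:ℝ) - (1 - p) = p + 2 by ring, mul_div_assoc]
  have ha1 : n / (n + 1) < 1 := (div_lt_one (by linarith)).2 (by linarith)
  have han : n / (n + 1) < n := div_lt_self hn (by linarith)
  simp_rw [hintegrand]
  rw [intervalIntegral.integral_const_mul, integral_eq_fstarPrimitive hp (by positivity) ha1 han,
    fstarPrimitive_div_add_one hn, ← rpow_add hn, neg_add_cancel, rpow_zero]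
end

section
/- For every integer N ≥ 2 and every x ∈ [0, N/(N+1)], the function U_*(x) = ∫_0^x (1-s) f_*(s) ds + ∫_0^1 s f_*(s) ds satisfies the closed-form identity U_*(x) = ( (N-x) / (N^2 (1-x)) )^{1/(N-1)}. -/
open Real MeasureTheory

/-- The Nash-equilibrium density of the `N`-player elimination game:
`f_*(x) = C_N / ((1-x)^{3-b} (N-x)^b)` on `[0, N/(N+1)]`, and `0` above the support,
where `b = (N-2)/(N-1)` and `C_N = N^{-2/(N-1)}`. -/
noncomputable def fstar (N : ℕ) (x : ℝ) : ℝ :=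
  if x ≤ (N:ℝ)/((N:ℝ)+1) then
    (N:ℝ) ^ (-(2:ℝ)/((N:ℝ)-1)) /
      ((1-x) ^ ((3:ℝ) - ((N:ℝ)-2)/((N:ℝ)-1)) * ((N:ℝ)-x) ^ (((N:ℝ)-2)/((N:ℝ)-1)))
  else 0

/-- `U_*(x) = ∫_0^x (1-s) f_*(s) ds + ∫_0^1 s f_*(s) ds`. -/
noncomputable def Ustar (N : ℕ) (x : ℝ) : ℝ :=
  (∫ s in (0:ℝ)..x, (1-s) * fstar N s) + ∫ s in (0:ℝ)..1, s * fstar N s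

/-! Write `V(x) = (q x)^c` with `q x = (N-x)/(N²(1-x))` and `c = 1/(N-1)`. Since `b = 1 - c`,
on `[0, N/(N+1)]` one has `f_* = V / ((N-x)(1-x)²)` and `V' = (1-x) f_*`, so the first integral
is `V(x) - V(0)`. Moreover `V(x) ((N+1)x - N) / (N(1-x))` is an antiderivative of `x f_*(x)` that
vanishes at `N/(N+1)` and equals `-V(0)` at `0`; as `f_*` vanishes beyond `N/(N+1)`, the second
integral is `V(0)`. -/

noncomputable def ustarFormula (n x : ℝ) : ℝ := ((n - x) / (n ^ 2 * (1 - x))) ^ (1 / (n - 1))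

section Formula

variable {n s : ℝ}

lemma ustarFormula_div_eq (hn : 1 < n) (hs : s < 1) :
    ustarFormula n s / ((n - s) * (1 - s) ^ 2) =
      n ^ (-2 / (n - 1)) / ((1 - s) ^ (3 - (n - 2) / (n - 1)) * (n - s) ^ ((n - 2) / (n - 1))) := by
  have h1 : 0 < 1 - s := by linarith
  have h2 : 0 < n - s := by linarith
  have h0 : 0 < n := by linarith
  have hn1 : n - 1 ≠ 0 := by linarith
  set c := 1 / (n - 1) with hc
  have e1 : -2 / (n - 1) = -((2 : ℕ) * c) := by rw [hc]; push_cast; ring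
  have e2 : 3 - (n - 2) / (n - 1) = c + (2 : ℕ) := by rw [hc]; push_cast; field_simp; ring
  have e3 : (n - 2) / (n - 1) = 1 - c := by rw [hc]; field_simp; ring
  rw [ustarFormula, ← hc, e1, e2, e3, rpow_neg h0.le, rpow_mul h0.le, rpow_add h1, rpow_sub h2,
    rpow_one, rpow_natCast, rpow_natCast, div_rpow h2.le (by positivity),
    mul_rpow (by positivity) h1.le]
  have : 0 < (n - s) ^ c := by positivity
  have : 0 < (1 - s) ^ c := by positivity
  have : 0 < (n ^ 2) ^ c := by positivity
  field_simp

lemma hasDerivAt_ustarFormula (hn : 1 < n) (hs : s < 1) :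
    HasDerivAt (ustarFormula n) (ustarFormula n s / ((n - s) * (1 - s))) s := by
  have h1 : 0 < 1 - s := by linarith
  have h2 : 0 < n - s := by linarith
  have hn1 : n - 1 ≠ 0 := by linarith
  have hq : HasDerivAt (fun t => (n - t) / (n ^ 2 * (1 - t)))
      ((n - 1) / (n ^ 2 * (1 - s) ^ 2)) s := by
    refine (((hasDerivAt_id s).const_sub n).div
      (((hasDerivAt_id s).const_sub 1).const_mul (n ^ 2)) (by positivity)).congr_deriv ?_
    simp only [id]
    field_simp
    ring
  refine (hq.rpow_const (p := 1 / (n - 1)) (Or.inl (by positivity))).congr_deriv ?_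
  rw [ustarFormula, rpow_sub_one (by positivity)]
  field_simp

lemma hasDerivAt_ustarFormula_mul (hn : 1 < n) (hs : s < 1) :
    HasDerivAt (fun t => ustarFormula n t * (((n + 1) * t - n) / (n * (1 - t))))
      (s * (ustarFormula n s / ((n - s) * (1 - s) ^ 2))) s := by
  have h1 : 0 < 1 - s := by linarith
  have h2 : 0 < n - s := by linarith
  have hφ : HasDerivAt (fun t => ((n + 1) * t - n) / (n * (1 - t))) (1 / (n * (1 - s) ^ 2)) s := by
    refine ((((hasDerivAt_id s).const_mul (n + 1)).sub_const n).div
      (((hasDerivAt_id s).const_sub 1).const_mul n) (by positivity)).congr_deriv ?_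
    simp only [id]
    field_simp
    ring
  refine ((hasDerivAt_ustarFormula hn hs).mul hφ).congr_deriv ?_
  field_simp
  ring

end Formula

lemma div_add_one_lt_one {x : ℝ} (hx : 0 ≤ x) : x / (x + 1) < 1 :=
  (div_lt_one (by positivity)).2 (lt_add_one x)

section Density

variable {N : ℕ}

lemma fstar_of_le (hN : 2 ≤ N) {s : ℝ} (hs : s ≤ N / (N + 1)) :
    fstar N s = ustarFormula N s / ((N - s) * (1 - s) ^ 2) := by
  have hN' : (1 : ℝ) < N := by exact_mod_cast hN
  rw [fstar, if_pos hs, ustarFormula_div_eq hN' (hs.trans_lt (div_add_one_lt_one N.cast_nonneg))]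

lemma fstar_of_lt {s : ℝ} (hs : N / (N + 1) < s) : fstar N s = 0 :=
  if_neg hs.not_ge

lemma continuousOn_fstar (hN : 2 ≤ N) : ContinuousOn (fstar N) (Set.Iic (N / (N + 1))) := by
  have hN' : (1 : ℝ) < N := by exact_mod_cast hN
  refine ContinuousOn.congr (fun s hs => ?_) (fun s hs => fstar_of_le hN hs)
  have hs1 : s < 1 := hs.trans_lt (div_add_one_lt_one N.cast_nonneg)
  refine ((hasDerivAt_ustarFormula hN' hs1).continuousAt.div (by fun_prop) ?_).continuousWithinAt
  have : (0 : ℝ) < (N - s) * (1 - s) ^ 2 := by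
    have : 0 < 1 - s := by linarith
    have : 0 < (N : ℝ) - s := by linarith
    positivity
  exact this.ne'

lemma intervalIntegrable_mul_fstar (hN : 2 ≤ N) {g : ℝ → ℝ} (hg : Continuous g) {x : ℝ}
    (hx : x ≤ N / (N + 1)) : IntervalIntegrable (fun s => g s * fstar N s) volume 0 x := by
  have hsub : Set.uIcc 0 x ⊆ Set.Iic ((N : ℝ) / (N + 1)) := fun s hs =>
    (Set.mem_uIcc.1 hs).elim (fun h => h.2.trans hx) (fun h => h.2.trans (by positivity))
  exact (hg.continuousOn.mul ((continuousOn_fstar hN).mono hsub)).intervalIntegrable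

lemma integral_one_sub_mul_fstar (hN : 2 ≤ N) {x : ℝ} (hx : x ≤ N / (N + 1)) :
    ∫ s in (0 : ℝ)..x, (1 - s) * fstar N s = ustarFormula N x - ustarFormula N 0 := by
  have hN' : (1 : ℝ) < N := by exact_mod_cast hN
  refine intervalIntegral.integral_eq_sub_of_hasDerivAt (fun s hs => ?_)
    (intervalIntegrable_mul_fstar hN (by fun_prop) hx)
  have hsa : s ≤ N / (N + 1) :=
    (Set.mem_uIcc.1 hs).elim (fun h => h.2.trans hx) (fun h => h.2.trans (by positivity))
  have hs1 : s < 1 := hsa.trans_lt (div_add_one_lt_one N.cast_nonneg)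
  have : 0 < 1 - s := sub_pos.2 hs1
  refine (hasDerivAt_ustarFormula hN' hs1).congr_deriv ?_
  rw [fstar_of_le hN hsa]
  field_simp

lemma integral_mul_fstar (hN : 2 ≤ N) :
    ∫ s in (0 : ℝ)..1, s * fstar N s = ustarFormula N 0 := by
  have hN' : (1 : ℝ) < N := by exact_mod_cast hN
  have ha1 : (N : ℝ) / (N + 1) < 1 := div_add_one_lt_one N.cast_nonneg
  have hderiv : ∀ s ∈ Set.uIcc 0 ((N : ℝ) / (N + 1)),
      HasDerivAt (fun t => ustarFormula N t * (((N + 1) * t - N) / (N * (1 - t))))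
        (s * fstar N s) s := fun s hs => by
    rw [Set.uIcc_of_le (by positivity)] at hs
    rw [fstar_of_le hN hs.2]
    exact hasDerivAt_ustarFormula_mul hN' (hs.2.trans_lt ha1)
  have htail : Set.EqOn (fun s => s * fstar N s) (fun _ => 0) (Set.uIoo (N / (N + 1)) 1) :=
    fun s hs => by
      rw [Set.uIoo_of_le ha1.le] at hs
      simp [fstar_of_lt hs.1]
  have hhead := intervalIntegrable_mul_fstar hN continuous_id' le_rfl
  rw [← intervalIntegral.integral_add_adjacent_intervals hhead
      ((intervalIntegrable_congr_uIoo htail).2 IntervalIntegrable.zero),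
    intervalIntegral.integral_congr_uIoo htail, intervalIntegral.integral_zero, add_zero,
    intervalIntegral.integral_eq_sub_of_hasDerivAt hderiv hhead]
  have : (N : ℝ) + 1 ≠ 0 := by positivity
  field_simp
  ring

end Density

/-- for `N ≥ 2` and `x ∈ [0, N/(N+1)]`,
`U_*(x) = ((N-x)/(N² (1-x)))^{1/(N-1)}`. -/
theorem Ustar_closed_form (N : ℕ) (hN : 2 ≤ N)
    (x : ℝ) (hx : x ∈ Set.Icc (0:ℝ) ((N:ℝ)/((N:ℝ)+1))) :
    Ustar N x = (((N:ℝ)-x)/((N:ℝ)^2 * (1-x))) ^ ((1:ℝ)/((N:ℝ)-1)) := by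
  rw [Ustar, integral_one_sub_mul_fstar hN hx.2, integral_mul_fstar hN, sub_add_cancel]
  rfl
end

section
/- For every integer N ≥ 2, the average elimination probability under the Nash equilibrium equals V_* = ∫_0^1 s f_*(s) ds = N^{-1/(N-1)}. -/
open Real MeasureTheory

namespace NashDensity

variable {n b : ℝ}

noncomputable def primitive (n b s : ℝ) : ℝ :=
  ((n + 1) / n * s - 1) * ((1 - s) ^ (b - 2) * (n - s) ^ (1 - b))

theorem hasDerivAt_primitive (hb : (1 - b) * (n - 1) = 1) (hn : n ≠ 0) {s : ℝ}
    (hs1 : s < 1) (hsn : s < n) :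
    HasDerivAt (primitive n b) (s / ((1 - s) ^ (3 - b) * (n - s) ^ b)) s := by
  have h1s : 0 < 1 - s := by linarith
  have hns : 0 < n - s := by linarith
  have hu : HasDerivAt (fun x : ℝ => (1 - x) ^ (b - 2)) (-1 * (b - 2) * (1 - s) ^ (b - 2 - 1)) s :=
    ((hasDerivAt_id s).const_sub 1).rpow_const (Or.inl h1s.ne')
  have hv : HasDerivAt (fun x : ℝ => (n - x) ^ (1 - b)) (-1 * (1 - b) * (n - s) ^ (1 - b - 1)) s :=
    ((hasDerivAt_id s).const_sub n).rpow_const (Or.inl hns.ne')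
  have hg : HasDerivAt (fun x : ℝ => (n + 1) / n * x - 1) ((n + 1) / n * 1) s :=
    ((hasDerivAt_id s).const_mul _).sub_const 1
  refine (hg.mul (hu.mul hv)).congr_deriv ?_
  have split_u : (1 - s) ^ (b - 2) = (1 - s) ^ (b - 2 - 1) * (1 - s) := by
    rw [← rpow_add_one h1s.ne']; ring_nf
  have split_v : (n - s) ^ (1 - b) = (n - s) ^ (1 - b - 1) * (n - s) := by
    rw [← rpow_add_one hns.ne']; ring_nf
  have target : s / ((1 - s) ^ (3 - b) * (n - s) ^ b)
      = s * ((1 - s) ^ (b - 2 - 1) * (n - s) ^ (1 - b - 1)) := by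
    rw [show b - 2 - 1 = -(3 - b) by ring, show 1 - b - 1 = -b by ring,
      rpow_neg h1s.le, rpow_neg hns.le]
    field_simp
  -- `(1 - b)(n - 1) = 1` is exactly what makes the quadratic in `s` collapse to `s`.
  have collapse : (n + 1) / n * (1 - s) * (n - s)
      + ((n + 1) / n * s - 1) * (-(b - 2) * (n - s) - (1 - b) * (1 - s)) = s := by
    field_simp
    linear_combination ((n + 1) * s - n) * hb
  simp only [Pi.mul_apply]
  rw [split_u, split_v, target]
  linear_combination ((1 - s) ^ (b - 2 - 1) * (n - s) ^ (1 - b - 1)) * collapse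

theorem primitive_div_add_one (hn : 0 < n) : primitive n b (n / (n + 1)) = 0 := by
  have : (n + 1) / n * (n / (n + 1)) - 1 = 0 := by field_simp; ring
  simp [primitive, this]

theorem primitive_zero : primitive n b 0 = -n ^ (1 - b) := by
  simp [primitive, one_rpow]

theorem integral_div_rpow_mul_rpow (hb : (1 - b) * (n - 1) = 1) (hn : 1 < n) :
    ∫ s in (0:ℝ)..n / (n + 1), s / ((1 - s) ^ (3 - b) * (n - s) ^ b) = n ^ (1 - b) := by
  have ha0 : 0 ≤ n / (n + 1) := by positivity
  have ha1 : n / (n + 1) < 1 := by rw [div_lt_one (by linarith)]; linarith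
  have hpos : ∀ s ∈ Set.Icc 0 (n / (n + 1)), 0 < 1 - s ∧ 0 < n - s := fun s hs =>
    ⟨by linarith [hs.2], by linarith [hs.2]⟩
  have hcont : ContinuousOn (fun s : ℝ => s / ((1 - s) ^ (3 - b) * (n - s) ^ b))
      (Set.Icc 0 (n / (n + 1))) := by
    refine continuousOn_id.div
      (((continuousOn_const.sub continuousOn_id).rpow_const fun s hs =>
        Or.inl (hpos s hs).1.ne').mul
      ((continuousOn_const.sub continuousOn_id).rpow_const fun s hs =>
        Or.inl (hpos s hs).2.ne')) fun s hs => ?_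
    have := hpos s hs
    exact (mul_pos (rpow_pos_of_pos this.1 _) (rpow_pos_of_pos this.2 _)).ne'
  rw [intervalIntegral.integral_eq_sub_of_hasDerivAt (f := primitive n b),
    primitive_div_add_one (by linarith), primitive_zero, zero_sub, neg_neg]
  · rw [Set.uIcc_of_le ha0]
    exact fun s hs => hasDerivAt_primitive hb (by positivity) (hs.2.trans_lt ha1)
      (by linarith [(hpos s hs).2])
  · exact hcont.intervalIntegrable_of_Icc ha0

end NashDensity

theorem mul_fstar_eq_indicator (N : ℕ) :
    (fun s => s * fstar N s) = {x | x ≤ (N:ℝ) / (N + 1)}.indicator fun s =>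
      (N:ℝ) ^ (-(2:ℝ) / (N - 1)) * (s / ((1 - s) ^ (3 - ((N:ℝ) - 2) / (N - 1)) *
        ((N:ℝ) - s) ^ (((N:ℝ) - 2) / (N - 1)))) := by
  ext s
  simp only [fstar, Set.indicator_apply, Set.mem_ofPred_eq]
  split_ifs
  exacts [mul_div_left_comm _ _ _, mul_zero s]

/-- the average elimination probability under the Nash equilibrium:
`V_* = ∫_0^1 s f_*(s) ds = N^{-1/(N-1)}`. -/
theorem Vstar_closed_form (N : ℕ) (hN : 2 ≤ N) :
    ∫ s in (0:ℝ)..1, s * fstar N s = (N:ℝ) ^ (-(1:ℝ)/((N:ℝ)-1)) := by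
  have hn : (1:ℝ) < N := by exact_mod_cast hN
  have hn1 : (N:ℝ) - 1 ≠ 0 := by linarith
  have hb : (1 - ((N:ℝ) - 2) / (N - 1)) * ((N:ℝ) - 1) = 1 := by
    field_simp; ring
  have ha : (N:ℝ) / (N + 1) ∈ Set.Icc (0:ℝ) 1 :=
    ⟨by positivity, (div_le_one (by positivity)).2 (by linarith)⟩
  rw [mul_fstar_eq_indicator, intervalIntegral.integral_indicator ha,
    intervalIntegral.integral_const_mul, NashDensity.integral_div_rpow_mul_rpow hb hn,
    ← rpow_add (by linarith)]
  congr 1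
  field_simp
  ring
end

section
/- Let N ≥ 3 be an integer, b = (N-2)/(N-1), and let B > 0 and C > 0 be real constants. Then the function f(x) = C / ((1-x)^{3-b} (1+B-x)^{b}) is twice differentiable on [0,1), satisfies 3 f(x) − (1-x) f'(x) > 0 there, and solves the nonlinear second-order ODE (1-x) f(x) = (N-2) · d/dx [ (1-x)^2 f(x)^2 / (3 f(x) − (1-x) f'(x)) ] for all x ∈ [0,1). -/
/-!
The logarithmic derivative of `f` is `(3-b)/(1-x) + b/(1+B-x)`, so
`3f - (1-x)f' = bBf/(1+B-x)`, positive for `B, C > 0`. The bracket in the ODE is therefore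
`(1-x)²(1+B-x)f/(bB)`, and the same logarithmic derivative gives
`((1-x)²(1+B-x)f)' = (1-b)B(1-x)f`. The ODE then reduces to `(N-2)(1-b) = b`.
-/

open Real Filter Topology

theorem hasDerivAt_const_sub_rpow {c p x : ℝ} (hx : x < c) :
    HasDerivAt (fun y => (c - y) ^ p) (-p * (c - x) ^ p / (c - x)) x := by
  have hsub : HasDerivAt (fun y => c - y) (-1) x := by simpa using (hasDerivAt_id x).const_sub c
  convert hsub.rpow_const (p := p) (Or.inl (sub_ne_zero.2 hx.ne')) using 1
  rw [rpow_sub_one (sub_ne_zero.2 hx.ne')]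
  ring

noncomputable def profile (B C b x : ℝ) : ℝ := C / ((1 - x) ^ (3 - b) * (1 + B - x) ^ b)

section
variable {B C b x : ℝ}

theorem profile_ne_zero (hC : C ≠ 0) (hB : 0 ≤ B) (hx : x < 1) : profile B C b x ≠ 0 := by
  have : 0 < 1 + B - x := by linarith
  unfold profile
  exact div_ne_zero hC (mul_pos (rpow_pos_of_pos (by linarith) _) (rpow_pos_of_pos this _)).ne'

theorem profile_pos (hC : 0 < C) (hB : 0 ≤ B) (hx : x < 1) : 0 < profile B C b x := by
  have : 0 < 1 + B - x := by linarith
  unfold profile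
  exact div_pos hC (mul_pos (rpow_pos_of_pos (by linarith) _) (rpow_pos_of_pos this _))

theorem hasDerivAt_profile (hB : 0 ≤ B) (hx : x < 1) :
    HasDerivAt (profile B C b)
      (profile B C b x * ((3 - b) / (1 - x) + b / (1 + B - x))) x := by
  have hu : 0 < 1 - x := by linarith
  have hv : 0 < 1 + B - x := by linarith
  have hden : HasDerivAt (fun y => (1 - y) ^ (3 - b) * (1 + B - y) ^ b) _ x :=
    (hasDerivAt_const_sub_rpow (p := 3 - b) hx).mul
      (hasDerivAt_const_sub_rpow (p := b) (show x < 1 + B by linarith))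
  have hprof : profile B C b = fun y => C * ((1 - y) ^ (3 - b) * (1 + B - y) ^ b)⁻¹ :=
    funext fun _ => div_eq_mul_inv _ _
  rw [hprof]
  refine ((hden.inv (by positivity)).const_mul C).congr_deriv ?_
  field_simp
  ring

theorem deriv_profile (hB : 0 ≤ B) (hx : x < 1) :
    deriv (profile B C b) x = profile B C b x * ((3 - b) / (1 - x) + b / (1 + B - x)) :=
  (hasDerivAt_profile hB hx).deriv

theorem deriv_profile_eventuallyEq (hB : 0 ≤ B) (hx : x < 1) :
    deriv (profile B C b) =ᶠ[𝓝 x]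
      fun y => profile B C b y * ((3 - b) / (1 - y) + b / (1 + B - y)) :=
  eventually_lt_nhds hx |>.mono fun _ hy => deriv_profile hB hy

theorem differentiableAt_deriv_profile (hB : 0 ≤ B) (hx : x < 1) :
    DifferentiableAt ℝ (deriv (profile B C b)) x := by
  have hu : 1 - x ≠ 0 := by linarith
  have hv : 1 + B - x ≠ 0 := by linarith
  refine (deriv_profile_eventuallyEq hB hx).differentiableAt_iff.2 ?_
  exact (hasDerivAt_profile hB hx).differentiableAt.mul (by fun_prop (disch := assumption))

theorem three_mul_profile_sub_deriv (hB : 0 ≤ B) (hx : x < 1) :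
    3 * profile B C b x - (1 - x) * deriv (profile B C b) x
      = b * B * profile B C b x / (1 + B - x) := by
  have hu : 1 - x ≠ 0 := by linarith
  have hv : 1 + B - x ≠ 0 := by linarith
  rw [deriv_profile hB hx]
  field_simp
  ring

theorem hasDerivAt_one_sub_sq_mul_profile (hB : 0 ≤ B) (hx : x < 1) :
    HasDerivAt (fun y => (1 - y) ^ 2 * (1 + B - y) * profile B C b y)
      ((1 - b) * B * ((1 - x) * profile B C b x)) x := by
  have hu : 1 - x ≠ 0 := by linarith
  have hv : 1 + B - x ≠ 0 := by linarith
  have hpoly : HasDerivAt (fun y => (1 - y) ^ 2 * (1 + B - y)) _ x :=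
    (((hasDerivAt_id x).const_sub 1).pow 2).mul ((hasDerivAt_id x).const_sub (1 + B))
  refine (hpoly.mul (hasDerivAt_profile hB hx)).congr_deriv ?_
  simp only [id, Pi.pow_apply]
  field_simp
  ring

theorem deriv_profile_ode_rhs (hb : b ≠ 0) (hB : 0 < B) (hC : C ≠ 0) (hx : x < 1) :
    deriv (fun y => (1 - y) ^ 2 * profile B C b y ^ 2
        / (3 * profile B C b y - (1 - y) * deriv (profile B C b) y)) x
      = (1 - b) / b * ((1 - x) * profile B C b x) := by
  have hquot : (fun y => (1 - y) ^ 2 * profile B C b y ^ 2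
        / (3 * profile B C b y - (1 - y) * deriv (profile B C b) y))
      =ᶠ[𝓝 x] fun y => (b * B)⁻¹ * ((1 - y) ^ 2 * (1 + B - y) * profile B C b y) := by
    filter_upwards [eventually_lt_nhds hx] with y hy
    have hv : 1 + B - y ≠ 0 := by linarith
    have hP := profile_ne_zero (b := b) hC hB.le hy
    rw [three_mul_profile_sub_deriv hB.le hy]
    field_simp
  rw [hquot.deriv_eq, ((hasDerivAt_one_sub_sq_mul_profile hB.le hx).const_mul _).deriv]
  field_simp
end

/-- for an integer `N ≥ 3`, `b = (N-2)/(N-1)` and constants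
`B, C > 0`, the function `f(x) = C / ((1-x)^{3-b} (1+B-x)^b)` is twice
differentiable on `[0,1)`, satisfies `3 f(x) - (1-x) f'(x) > 0` there, and
solves the nonlinear second-order ODE
`(1-x) f(x) = (N-2) d/dx [ (1-x)² f(x)² / (3 f(x) - (1-x) f'(x)) ]`
for all `x ∈ [0,1)`. -/
theorem family_solves_second_order_ode (N : ℕ) (hN : 3 ≤ N)
    (B C : ℝ) (hB : 0 < B) (hC : 0 < C) (f : ℝ → ℝ)
    (hf : ∀ x : ℝ, f x =
      C / ((1-x) ^ ((3:ℝ) - ((N:ℝ)-2)/((N:ℝ)-1)) * (1+B-x) ^ (((N:ℝ)-2)/((N:ℝ)-1)))) :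
    ∀ x ∈ Set.Ico (0:ℝ) 1,
      DifferentiableAt ℝ f x ∧
      DifferentiableAt ℝ (deriv f) x ∧
      0 < 3 * f x - (1-x) * deriv f x ∧
      (1-x) * f x = ((N:ℝ)-2) *
        deriv (fun y => (1-y)^2 * (f y)^2 / (3 * f y - (1-y) * deriv f y)) x := by
  set b : ℝ := ((N:ℝ) - 2) / ((N:ℝ) - 1) with hb_def
  obtain rfl : f = profile B C b := funext hf
  have hN' : (3:ℝ) ≤ N := by exact_mod_cast hN
  have hN1 : (0:ℝ) < N - 1 := by linarith
  have hN2 : (0:ℝ) < N - 2 := by linarith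
  have hb : 0 < b := div_pos hN2 hN1
  have hcoef : ((N:ℝ) - 2) * ((1 - b) / b) = 1 := by
    rw [hb_def]
    field_simp
    ring
  rintro x ⟨-, hx⟩
  refine ⟨(hasDerivAt_profile hB.le hx).differentiableAt,
    differentiableAt_deriv_profile hB.le hx, ?_, ?_⟩
  · have hP := profile_pos (b := b) hC hB.le hx
    have hv : 0 < 1 + B - x := by linarith
    rw [three_mul_profile_sub_deriv hB.le hx]
    positivity
  · rw [deriv_profile_ode_rhs hb.ne' hB hC.ne' hx, ← mul_assoc, hcoef, one_mul]
end

section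
/- Let N ≥ 3 be an integer, b = (N-2)/(N-1), and let B > 0 and C > 0 be real constants. With f(x) = C / ((1-x)^{3-b} (1+B-x)^{b}) and U(x) = (N-1)(C/B) · ((1+B-x)/(1-x))^{1/(N-1)}, the identity [−3 f(x) + (1-x) f'(x)] · U(x) + (N-2)(1-x)^2 f(x)^2 = 0 holds for all x ∈ [0,1). -/
open Real

/-! With `u = 1 - x`, `v = 1 + B - x`, `s = 1/(N-1)` and `r = (v/u)^s` one has
`b = 1 - s`, `f = C r / (u² v)` and `U = (N-1)(C/B) r`. The logarithmic derivative
`f'/f = (3 - b)/u + b/v` gives `-3 f + u f' = -b (v - u) f / v = -b B f / v`, after which the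
identity is a rational one in `u, v, r`. -/

theorem hasDerivAt_div_rpow_mul_rpow {C a b p q x : ℝ} (hp : x < p) (hq : x < q) :
    HasDerivAt (fun y => C / ((p - y) ^ a * (q - y) ^ b))
      (C / ((p - x) ^ a * (q - x) ^ b) * (a / (p - x) + b / (q - x))) x := by
  have hu : 0 < p - x := sub_pos.mpr hp
  have hv : 0 < q - x := sub_pos.mpr hq
  have hpa := ((hasDerivAt_id x).const_sub p).rpow_const (p := a) (Or.inl hu.ne')
  have hqb := ((hasDerivAt_id x).const_sub q).rpow_const (p := b) (Or.inl hv.ne')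
  have hden : (p - x) ^ a * (q - x) ^ b ≠ 0 := by positivity
  refine ((hasDerivAt_const x C).div (hpa.mul hqb) hden).congr_deriv ?_
  simp only [id, Pi.mul_apply, rpow_sub_one hu.ne', rpow_sub_one hv.ne']
  field_simp
  ring

theorem rpow_two_add_mul_rpow_one_sub {u v : ℝ} (hu : 0 < u) (hv : 0 < v) (s : ℝ) :
    u ^ (2 + s) * v ^ (1 - s) = u ^ 2 * v / (v / u) ^ s := by
  rw [rpow_add hu, rpow_sub hv, div_rpow hv.le hu.le, rpow_one, rpow_two]
  field_simp

theorem family_first_order_identity_general (N : ℕ) (hN : 3 ≤ N)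
    (B C : ℝ) (hB : 0 < B) (f U : ℝ → ℝ)
    (hf : ∀ x : ℝ, f x =
      C / ((1-x) ^ ((3:ℝ) - ((N:ℝ)-2)/((N:ℝ)-1)) * (1+B-x) ^ (((N:ℝ)-2)/((N:ℝ)-1))))
    (hU : ∀ x : ℝ, U x =
      ((N:ℝ)-1) * (C/B) * ((1+B-x)/(1-x)) ^ ((1:ℝ)/((N:ℝ)-1))) :
    ∀ x ∈ Set.Ico (0:ℝ) 1,
      (-3 * f x + (1-x) * deriv f x) * U x + ((N:ℝ)-2) * (1-x)^2 * (f x)^2 = 0 := by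
  rintro x ⟨-, hx1⟩
  have hN1 : (N:ℝ) - 1 ≠ 0 := by
    have : (3:ℝ) ≤ N := by exact_mod_cast hN
    linarith
  set s : ℝ := 1 / ((N:ℝ) - 1)
  have hs : s ≠ 0 := one_div_ne_zero hN1
  have hb : ((N:ℝ) - 2) / ((N:ℝ) - 1) = 1 - s := by simp only [s]; field_simp; ring
  have hN1s : (N:ℝ) - 1 = 1 / s := by simp only [s, one_div_one_div]
  have hu : 0 < 1 - x := by linarith
  have hv : 0 < 1 + B - x := by linarith
  have hfx : f x = C * ((1+B-x)/(1-x)) ^ s / ((1-x) ^ 2 * (1+B-x)) := by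
    rw [hf, hb, show (3:ℝ) - (1 - s) = 2 + s by ring, rpow_two_add_mul_rpow_one_sub hu hv]
    field_simp
  have hf' : deriv f x = f x * ((3 - (1 - s)) / (1 - x) + (1 - s) / (1 + B - x)) := by
    rw [funext hf, hb]
    exact (hasDerivAt_div_rpow_mul_rpow hx1 (by linarith)).deriv
  have hlogDeriv : -3 * f x + (1 - x) * deriv f x = -(1 - s) * B * f x / (1 + B - x) := by
    rw [hf']
    field_simp
    ring
  rw [hlogDeriv, hU, hfx, show (N:ℝ) - 2 = 1 / s - 1 by rw [← hN1s]; ring, hN1s]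
  field_simp
  ring

/-- for an integer `N ≥ 3`, `b = (N-2)/(N-1)`, constants
`B, C > 0`, `f(x) = C / ((1-x)^{3-b} (1+B-x)^b)` and
`U(x) = (N-1)(C/B) ((1+B-x)/(1-x))^{1/(N-1)}`, the identity
`(-3 f(x) + (1-x) f'(x)) U(x) + (N-2)(1-x)² f(x)² = 0` holds on `[0,1)`. -/
theorem family_first_order_identity (N : ℕ) (hN : 3 ≤ N)
    (B C : ℝ) (hB : 0 < B) (hC : 0 < C) (f U : ℝ → ℝ)
    (hf : ∀ x : ℝ, f x =
      C / ((1-x) ^ ((3:ℝ) - ((N:ℝ)-2)/((N:ℝ)-1)) * (1+B-x) ^ (((N:ℝ)-2)/((N:ℝ)-1))))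
    (hU : ∀ x : ℝ, U x =
      ((N:ℝ)-1) * (C/B) * ((1+B-x)/(1-x)) ^ ((1:ℝ)/((N:ℝ)-1))) :
    ∀ x ∈ Set.Ico (0:ℝ) 1,
      (-3 * f x + (1-x) * deriv f x) * U x + ((N:ℝ)-2) * (1-x)^2 * (f x)^2 = 0 :=
  family_first_order_identity_general N hN B C hB f U hf hU
end

section
/- For every real ξ ≤ 0, lim_{N→∞} (1/N) · f_{*,N}( N/(N+1) + ξ/N ) = 1/(1-ξ)^2, where f_{*,N} denotes the N-player Nash-equilibrium density and the limit is taken over integers N large enough that N/(N+1) + ξ/N ∈ [0, N/(N+1)]. -/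
/-!
Put `x_N = N/(N+1) + ξ/N` and `b_N = (N-2)/(N-1)`. Factoring `N` out of `1 - x_N` and `N - x_N`
gives `(1/N) f_{*,N}(x_N) = ((N (1 - x_N))^(3 - b_N) (1 - x_N/N)^(b_N))⁻¹`, because the stray powers
of `N` have total exponent `-2/(N-1) + (3 - b_N) - b_N - 1 = 0`. Now `N (1 - x_N) = N/(N+1) - ξ → 1 - ξ`,
`x_N / N → 0` and `b_N → 1`, and `(a, b) ↦ a ^ b` is continuous at `(1 - ξ, 2)` and `(1, 1)`.
-/

open Real Filter

open Topology

lemma one_div_mul_fstar {N : ℕ} (hN : 2 ≤ N) {x : ℝ} (hx : x ≤ N / (N + 1)) :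
    1 / (N : ℝ) * fstar N x =
      (((N : ℝ) * (1 - x)) ^ (3 - ((N : ℝ) - 2) / ((N : ℝ) - 1)) *
        (1 - x / N) ^ (((N : ℝ) - 2) / ((N : ℝ) - 1)))⁻¹ := by
  have hN2 : (2 : ℝ) ≤ N := by exact_mod_cast hN
  have hN0 : (0 : ℝ) < N := by linarith
  have hx1 : x < 1 := hx.trans_lt ((div_lt_one (by linarith)).2 (by linarith))
  have hxN : 0 < 1 - x / N := by rw [sub_pos, div_lt_one hN0]; linarith
  have hexp : (N : ℝ) ^ (-2 / ((N : ℝ) - 1)) * (N : ℝ) ^ (3 - ((N : ℝ) - 2) / ((N : ℝ) - 1)) =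
      N * (N : ℝ) ^ (((N : ℝ) - 2) / ((N : ℝ) - 1)) := by
    have hN1 : (N : ℝ) - 1 ≠ 0 := by linarith
    rw [← rpow_add hN0, ← rpow_one_add' hN0.le]
    · congr 1
      field_simp
      ring
    · rw [one_add_div hN1]
      exact div_ne_zero (by linarith) hN1
  have hNx : (N : ℝ) - x = N * (1 - x / N) := by field_simp
  rw [fstar, if_pos hx, hNx, mul_rpow hN0.le hxN.le, mul_rpow hN0.le (sub_nonneg.2 hx1.le)]
  field_simp
  rw [← neg_div, hexp]

/-- the scaling limit: for every `ξ ≤ 0`,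
`(1/N) f_{*,N}(N/(N+1) + ξ/N) → 1/(1-ξ)²` as `N → ∞`. -/
theorem fstar_scaling_limit (ξ : ℝ) (hξ : ξ ≤ 0) :
    Tendsto (fun N : ℕ => (1/(N:ℝ)) * fstar N ((N:ℝ)/((N:ℝ)+1) + ξ/(N:ℝ)))
      atTop (nhds (1/(1-ξ)^2)) := by
  set x : ℕ → ℝ := fun N => (N:ℝ)/((N:ℝ)+1) + ξ/(N:ℝ)
  have hx : Tendsto x atTop (𝓝 1) := by
    simpa using (tendsto_natCast_div_add_atTop (1 : ℝ)).add
      (tendsto_const_div_atTop_nhds_zero_nat ξ)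
  have hA : Tendsto (fun N : ℕ => (N : ℝ) * (1 - x N)) atTop (𝓝 (1 - ξ)) := by
    refine ((tendsto_natCast_div_add_atTop (1 : ℝ)).sub_const ξ).congr' ?_
    filter_upwards [eventually_ne_atTop 0] with N hN
    simp only [x]
    field_simp
    ring
  have hB : Tendsto (fun N : ℕ => 1 - x N / N) atTop (𝓝 1) := by
    simpa using (hx.div_atTop tendsto_natCast_atTop_atTop).const_sub 1
  have hb : Tendsto (fun N : ℕ => ((N : ℝ) - 2) / ((N : ℝ) - 1)) atTop (𝓝 1) := by
    simpa [sub_eq_neg_add] using tendsto_add_mul_div_add_mul_atTop_nhds (-2 : ℝ) (-1) 1 one_ne_zero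
  have hlim := ((hA.rpow (hb.const_sub 3) (.inl (by linarith))).mul
    (hB.rpow hb (.inl one_ne_zero))).inv₀ (by norm_num; linarith)
  have hval : ((1 - ξ) ^ ((3 : ℝ) - 1) * (1 : ℝ) ^ (1 : ℝ))⁻¹ = 1 / (1 - ξ) ^ 2 := by
    norm_num [one_div]
  rw [hval] at hlim
  refine hlim.congr' ?_
  filter_upwards [eventually_ge_atTop 2] with N hN
  refine (one_div_mul_fstar hN ?_).symm
  simp only [x]
  linarith [div_nonpos_of_nonpos_of_nonneg hξ (N.cast_nonneg : (0 : ℝ) ≤ N)]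
end
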